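/- The set of critical points of Ψ(R) = (1/2)·tr(P(I₃ − R)) on SO(3), with P = diag(p₁,p₂,p₃) and p₁,p₂,p₃ > 0 pairwise distinct, is exactly {I₃, exp(π·ê₁), exp(π·ê₂), exp(π·ê₃)}, i.e. the identity together with the three rotations by angle π about the coordinate axes. -/

import Mathlib

open Matrix

/-- The hat map `ℝ³ → 𝔰𝔬(3)`. -/
noncomputable def hat (ω : Fin 3 → ℝ) : Matrix (Fin 3) (Fin 3) ℝ :=
  !![0, -ω 2, ω 1; ω 2, 0, -ω 0; -ω 1, ω 0, 0]

/-- The skew-symmetric part of a matrix. -/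
noncomputable def skew (A : Matrix (Fin 3) (Fin 3) ℝ) : Matrix (Fin 3) (Fin 3) ℝ :=
  (1 / 2 : ℝ) • (A - Aᵀ)

open Complex in
/-- Embedding of `ℝ × ℂ` into `3×3` matrices, with `ℝ` in the `(0,0)` slot. -/
noncomputable def phi0 : (ℝ × ℂ) →ₐ[ℝ] Matrix (Fin 3) (Fin 3) ℝ where
  toFun x := !![x.1, 0, 0; 0, x.2.re, -x.2.im; 0, x.2.im, x.2.re]
  map_one' := by
    ext i j
    fin_cases i <;> fin_cases j <;>
      simp [Matrix.one_apply, Matrix.vecHead, Matrix.vecTail]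
  map_mul' x y := by
    ext i j
    fin_cases i <;> fin_cases j <;>
      simp [Matrix.mul_apply, Fin.sum_univ_three, Matrix.vecHead, Matrix.vecTail,
        Complex.mul_re, Complex.mul_im] <;> ring
  map_zero' := by
    ext i j
    fin_cases i <;> fin_cases j <;> simp [Matrix.vecHead, Matrix.vecTail]
  map_add' x y := by
    ext i j
    fin_cases i <;> fin_cases j <;> simp [Matrix.vecHead, Matrix.vecTail] <;> ring
  commutes' r := by
    ext i j
    fin_cases i <;> fin_cases j <;>
      simp [Matrix.algebraMap_eq_diagonal, Matrix.vecHead, Matrix.vecTail]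

open Complex in
/-- Embedding of `ℝ × ℂ` into `3×3` matrices, with `ℝ` in the `(1,1)` slot. -/
noncomputable def phi1 : (ℝ × ℂ) →ₐ[ℝ] Matrix (Fin 3) (Fin 3) ℝ where
  toFun x := !![x.2.re, 0, x.2.im; 0, x.1, 0; -x.2.im, 0, x.2.re]
  map_one' := by
    ext i j
    fin_cases i <;> fin_cases j <;>
      simp [Matrix.one_apply, Matrix.vecHead, Matrix.vecTail]
  map_mul' x y := by
    ext i j
    fin_cases i <;> fin_cases j <;>
      simp [Matrix.mul_apply, Fin.sum_univ_three, Matrix.vecHead, Matrix.vecTail,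
        Complex.mul_re, Complex.mul_im] <;> ring
  map_zero' := by
    ext i j
    fin_cases i <;> fin_cases j <;> simp [Matrix.vecHead, Matrix.vecTail]
  map_add' x y := by
    ext i j
    fin_cases i <;> fin_cases j <;> simp [Matrix.vecHead, Matrix.vecTail] <;> ring
  commutes' r := by
    ext i j
    fin_cases i <;> fin_cases j <;>
      simp [Matrix.algebraMap_eq_diagonal, Matrix.vecHead, Matrix.vecTail]

open Complex in
/-- Embedding of `ℝ × ℂ` into `3×3` matrices, with `ℝ` in the `(2,2)` slot. -/
noncomputable def phi2 : (ℝ × ℂ) →ₐ[ℝ] Matrix (Fin 3) (Fin 3) ℝ where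
  toFun x := !![x.2.re, -x.2.im, 0; x.2.im, x.2.re, 0; 0, 0, x.1]
  map_one' := by
    ext i j
    fin_cases i <;> fin_cases j <;>
      simp [Matrix.one_apply, Matrix.vecHead, Matrix.vecTail]
  map_mul' x y := by
    ext i j
    fin_cases i <;> fin_cases j <;>
      simp [Matrix.mul_apply, Fin.sum_univ_three, Matrix.vecHead, Matrix.vecTail,
        Complex.mul_re, Complex.mul_im] <;> ring
  map_zero' := by
    ext i j
    fin_cases i <;> fin_cases j <;> simp [Matrix.vecHead, Matrix.vecTail]
  map_add' x y := by
    ext i j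
    fin_cases i <;> fin_cases j <;> simp [Matrix.vecHead, Matrix.vecTail] <;> ring
  commutes' r := by
    ext i j
    fin_cases i <;> fin_cases j <;>
      simp [Matrix.algebraMap_eq_diagonal, Matrix.vecHead, Matrix.vecTail]

lemma phi0_cont : Continuous phi0 := by
  show Continuous fun x : ℝ × ℂ =>
    (!![x.1, 0, 0; 0, x.2.re, -x.2.im; 0, x.2.im, x.2.re] : Matrix (Fin 3) (Fin 3) ℝ)
  apply continuous_matrix; intro i j
  fin_cases i <;> fin_cases j <;> simp [Matrix.vecHead, Matrix.vecTail] <;> fun_prop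

lemma phi1_cont : Continuous phi1 := by
  show Continuous fun x : ℝ × ℂ =>
    (!![x.2.re, 0, x.2.im; 0, x.1, 0; -x.2.im, 0, x.2.re] : Matrix (Fin 3) (Fin 3) ℝ)
  apply continuous_matrix; intro i j
  fin_cases i <;> fin_cases j <;> simp [Matrix.vecHead, Matrix.vecTail] <;> fun_prop

lemma phi2_cont : Continuous phi2 := by
  show Continuous fun x : ℝ × ℂ =>
    (!![x.2.re, -x.2.im, 0; x.2.im, x.2.re, 0; 0, 0, x.1] : Matrix (Fin 3) (Fin 3) ℝ)
  apply continuous_matrix; intro i j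
  fin_cases i <;> fin_cases j <;> simp [Matrix.vecHead, Matrix.vecTail] <;> fun_prop

open Complex in
lemma exp_prod_pi : NormedSpace.exp ((0, Real.pi * I) : ℝ × ℂ) = (1, -1) := by
  ext
  · rw [Prod.fst_exp]; simp [NormedSpace.exp_zero]
  · rw [Prod.snd_exp]
    rw [← Complex.exp_eq_exp_ℂ, Complex.exp_pi_mul_I]

open Complex in
lemma exp0 : NormedSpace.exp (Real.pi • hat (Pi.single 0 1)) = !![1,0,0;0,-1,0;0,0,-1] := by
  have h : Real.pi • hat (Pi.single 0 1) = phi0 (0, Real.pi * I) := by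
    ext i j
    fin_cases i <;> fin_cases j <;>
      simp [phi0, hat, Matrix.vecHead, Matrix.vecTail, Pi.single_apply]
  letI : SeminormedRing (Matrix (Fin 3) (Fin 3) ℝ) := Matrix.linftyOpSemiNormedRing
  letI : NormedRing (Matrix (Fin 3) (Fin 3) ℝ) := Matrix.linftyOpNormedRing
  letI : NormedAlgebra ℝ (Matrix (Fin 3) (Fin 3) ℝ) := Matrix.linftyOpNormedAlgebra
  rw [h]; erw [← NormedSpace.map_exp phi0 phi0_cont, exp_prod_pi]
  ext i j
  fin_cases i <;> fin_cases j <;> simp [phi0, Matrix.vecHead, Matrix.vecTail]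

open Complex in
lemma exp1 : NormedSpace.exp (Real.pi • hat (Pi.single 1 1)) = !![-1,0,0;0,1,0;0,0,-1] := by
  have h : Real.pi • hat (Pi.single 1 1) = phi1 (0, Real.pi * I) := by
    ext i j
    fin_cases i <;> fin_cases j <;>
      simp [phi1, hat, Matrix.vecHead, Matrix.vecTail, Pi.single_apply]
  letI : SeminormedRing (Matrix (Fin 3) (Fin 3) ℝ) := Matrix.linftyOpSemiNormedRing
  letI : NormedRing (Matrix (Fin 3) (Fin 3) ℝ) := Matrix.linftyOpNormedRing
  letI : NormedAlgebra ℝ (Matrix (Fin 3) (Fin 3) ℝ) := Matrix.linftyOpNormedAlgebra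
  rw [h]; erw [← NormedSpace.map_exp phi1 phi1_cont, exp_prod_pi]
  ext i j
  fin_cases i <;> fin_cases j <;> simp [phi1, Matrix.vecHead, Matrix.vecTail]

open Complex in
lemma exp2 : NormedSpace.exp (Real.pi • hat (Pi.single 2 1)) = !![-1,0,0;0,-1,0;0,0,1] := by
  have h : Real.pi • hat (Pi.single 2 1) = phi2 (0, Real.pi * I) := by
    ext i j
    fin_cases i <;> fin_cases j <;>
      simp [phi2, hat, Matrix.vecHead, Matrix.vecTail, Pi.single_apply]
  letI : SeminormedRing (Matrix (Fin 3) (Fin 3) ℝ) := Matrix.linftyOpSemiNormedRing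
  letI : NormedRing (Matrix (Fin 3) (Fin 3) ℝ) := Matrix.linftyOpNormedRing
  letI : NormedAlgebra ℝ (Matrix (Fin 3) (Fin 3) ℝ) := Matrix.linftyOpNormedAlgebra
  rw [h]; erw [← NormedSpace.map_exp phi2 phi2_cont, exp_prod_pi]
  ext i j
  fin_cases i <;> fin_cases j <;> simp [phi2, Matrix.vecHead, Matrix.vecTail]

lemma key_signs {A B C u v w : ℝ} (hABC : A = B - C) (hA : A ≠ 0) (hB : B ≠ 0) (hC : C ≠ 0)
    (hu : 0 ≤ u) (hv : 0 ≤ v) (hw : 0 ≤ w)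
    (e1 : A * u + B * v = 0) (e2 : A * u - C * w = 0) :
    u = 0 ∧ v = 0 ∧ w = 0 := by
  have hu0 : u = 0 := by
    by_contra h
    have hu' : 0 < u := lt_of_le_of_ne hu (Ne.symm h)
    rcases hA.lt_or_gt with hA' | hA'
    · have hBv : 0 < B * v := by nlinarith
      have hCw : C * w < 0 := by nlinarith
      have hB' : 0 < B := by
        rcases hB.lt_or_gt with h' | h'
        · nlinarith
        · exact h'
      have hC' : C < 0 := by
        rcases hC.lt_or_gt with h' | h'
        · exact h'
        · nlinarith
      linarith
    · have hBv : B * v < 0 := by nlinarith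
      have hCw : 0 < C * w := by nlinarith
      have hB' : B < 0 := by
        rcases hB.lt_or_gt with h' | h'
        · exact h'
        · nlinarith
      have hC' : 0 < C := by
        rcases hC.lt_or_gt with h' | h'
        · nlinarith
        · exact h'
      linarith
  subst hu0
  refine ⟨rfl, ?_, ?_⟩
  · have h : B * v = 0 := by linarith
    rcases mul_eq_zero.mp h with h | h
    · exact absurd h hB
    · exact h
  · have h : C * w = 0 := by linarith
    rcases mul_eq_zero.mp h with h | h
    · exact absurd h hC
    · exact h

lemma sq_sub_sq_ne {x y : ℝ} (hx : 0 < x) (hy : 0 < y) (h : x ≠ y) : x ^ 2 - y ^ 2 ≠ 0 := by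
  intro h0
  have h1 : (x - y) * (x + y) = 0 := by linear_combination h0
  rcases mul_eq_zero.mp h1 with h2 | h2
  · exact h (by linarith)
  · linarith

theorem stmt_3 (p : Fin 3 → ℝ) (hp : ∀ i, 0 < p i)
    (hdistinct : ∀ i j, i ≠ j → p i ≠ p j)
    (P : Matrix (Fin 3) (Fin 3) ℝ) (hP : P = Matrix.diagonal p) :
    {R : Matrix (Fin 3) (Fin 3) ℝ | Rᵀ * R = 1 ∧ R.det = 1 ∧ skew (P * R) = 0} =
      {1, NormedSpace.exp (Real.pi • hat (Pi.single 0 1)),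
          NormedSpace.exp (Real.pi • hat (Pi.single 1 1)),
          NormedSpace.exp (Real.pi • hat (Pi.single 2 1))} := by
  subst hP
  rw [exp0, exp1, exp2]
  have ha := hp 0; have hb := hp 1; have hc := hp 2
  have hAne : p 0 ^ 2 - p 1 ^ 2 ≠ 0 := sq_sub_sq_ne ha hb (hdistinct 0 1 (by decide))
  have hBne : p 0 ^ 2 - p 2 ^ 2 ≠ 0 := sq_sub_sq_ne ha hc (hdistinct 0 2 (by decide))
  have hCne : p 1 ^ 2 - p 2 ^ 2 ≠ 0 := sq_sub_sq_ne hb hc (hdistinct 1 2 (by decide))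
  ext R
  simp only [Set.mem_setOf_eq, Set.mem_insert_iff, Set.mem_singleton_iff]
  constructor
  · rintro ⟨h1, hdet, hsk⟩
    have h2 : R * Rᵀ = 1 := mul_eq_one_comm.mp h1
    -- symmetry of P * R
    have sym : ∀ i j, p i * R i j = p j * R j i := by
      intro i j
      have h := congrFun (congrFun hsk i) j
      simp [skew, Matrix.diagonal_mul, Matrix.sub_apply, Matrix.smul_apply,
        Matrix.transpose_apply] at h
      linarith
    have s1 := sym 0 1
    have s2 := sym 0 2
    have s3 := sym 1 2
    have s1' : (p 0) ^ 2 * R 0 1 ^ 2 = (p 1) ^ 2 * R 1 0 ^ 2 := by linear_combination (p 0 * R 0 1 + p 1 * R 1 0) * s1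
    have s2' : (p 0) ^ 2 * R 0 2 ^ 2 = (p 2) ^ 2 * R 2 0 ^ 2 := by linear_combination (p 0 * R 0 2 + p 2 * R 2 0) * s2
    have s3' : (p 1) ^ 2 * R 1 2 ^ 2 = (p 2) ^ 2 * R 2 1 ^ 2 := by linear_combination (p 1 * R 1 2 + p 2 * R 2 1) * s3
    -- column and row norms
    have h1e := fun i j => congrFun (congrFun h1 i) j
    have h2e := fun i j => congrFun (congrFun h2 i) j
    have c0 := h1e 0 0
    have c1 := h1e 1 1
    have r0 := h2e 0 0
    have r1 := h2e 1 1
    simp [Matrix.mul_apply, Fin.sum_univ_three, Matrix.one_apply,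
      Matrix.transpose_apply] at c0 c1 r0 r1
    -- key equations
    have eq1 : (p 0 ^ 2 - p 1 ^ 2) * (p 2 ^ 2 * R 0 1 ^ 2)
        + (p 0 ^ 2 - p 2 ^ 2) * (p 1 ^ 2 * R 0 2 ^ 2) = 0 := by
      linear_combination (p 2 ^ 2) * s1' + (p 1 ^ 2) * s2'
        + (p 1 ^ 2 * p 2 ^ 2) * c0 - (p 1 ^ 2 * p 2 ^ 2) * r0
    have eq2 : (p 0 ^ 2 - p 1 ^ 2) * (p 2 ^ 2 * R 0 1 ^ 2)
        - (p 1 ^ 2 - p 2 ^ 2) * (p 1 ^ 2 * R 1 2 ^ 2) = 0 := by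
      linear_combination (p 2 ^ 2) * s1' - (p 1 ^ 2) * s3'
        - (p 1 ^ 2 * p 2 ^ 2) * c1 + (p 1 ^ 2 * p 2 ^ 2) * r1
    obtain ⟨hu, hv, hw⟩ := key_signs (by ring) hAne hBne hCne
      (by positivity) (by positivity) (by positivity) eq1 eq2
    have h01 : R 0 1 = 0 := by
      have h2' : p 2 ^ 2 ≠ 0 := by positivity
      have := (mul_eq_zero.mp hu).resolve_left h2'
      exact pow_eq_zero_iff (n := 2) (by norm_num) |>.mp this
    have h02 : R 0 2 = 0 := by
      have h1' : p 1 ^ 2 ≠ 0 := by positivity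
      have := (mul_eq_zero.mp hv).resolve_left h1'
      exact pow_eq_zero_iff (n := 2) (by norm_num) |>.mp this
    have h12 : R 1 2 = 0 := by
      have h1' : p 1 ^ 2 ≠ 0 := by positivity
      have := (mul_eq_zero.mp hw).resolve_left h1'
      exact pow_eq_zero_iff (n := 2) (by norm_num) |>.mp this
    have h10 : R 1 0 = 0 := by
      rw [h01, mul_zero] at s1
      rcases mul_eq_zero.mp s1.symm with h | h
      · exact absurd h (ne_of_gt hb)
      · exact h
    have h20 : R 2 0 = 0 := by
      rw [h02, mul_zero] at s2
      rcases mul_eq_zero.mp s2.symm with h | h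
      · exact absurd h (ne_of_gt hc)
      · exact h
    have h21 : R 2 1 = 0 := by
      rw [h12, mul_zero] at s3
      rcases mul_eq_zero.mp s3.symm with h | h
      · exact absurd h (ne_of_gt hc)
      · exact h
    -- diagonal entries
    have d00 : R 0 0 = 1 ∨ R 0 0 = -1 := by
      apply mul_self_eq_one_iff.mp
      rw [h10, h20] at c0; linarith
    have d11 : R 1 1 = 1 ∨ R 1 1 = -1 := by
      apply mul_self_eq_one_iff.mp
      rw [h01, h21] at c1; linarith
    rw [Matrix.det_fin_three] at hdet
    rw [h01, h02, h10, h12, h20, h21] at hdet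
    have d22 : R 0 0 * R 1 1 * R 2 2 = 1 := by linarith [hdet]; 
    rcases d00 with h00 | h00 <;> rcases d11 with h11 | h11 <;>
      rw [h00, h11] at d22 <;>
      [skip; skip; skip; skip] <;>
      first
      | (refine Or.inl ?_
         ext i j
         fin_cases i <;> fin_cases j <;>
           simp [h00, h01, h02, h10, h11, h12, h20, h21, Matrix.one_apply] <;> linarith [d22])
      | (refine Or.inr (Or.inl ?_) ; ext i j
         fin_cases i <;> fin_cases j <;>
           simp [h00, h01, h02, h10, h11, h12, h20, h21, Matrix.vecHead, Matrix.vecTail] <;>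
           linarith [d22])
      | (refine Or.inr (Or.inr (Or.inl ?_)) ; ext i j
         fin_cases i <;> fin_cases j <;>
           simp [h00, h01, h02, h10, h11, h12, h20, h21, Matrix.vecHead, Matrix.vecTail] <;>
           linarith [d22])
      | (refine Or.inr (Or.inr (Or.inr ?_)) ; ext i j
         fin_cases i <;> fin_cases j <;>
           simp [h00, h01, h02, h10, h11, h12, h20, h21, Matrix.vecHead, Matrix.vecTail] <;>
           linarith [d22])
  · rintro (rfl | rfl | rfl | rfl)
    · refine ⟨by simp, by simp, ?_⟩
      rw [mul_one]
      ext i j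
      simp [skew, Matrix.diagonal_transpose]
    all_goals
      refine ⟨?_, ?_, ?_⟩
      · ext i j
        fin_cases i <;> fin_cases j <;>
          simp [Matrix.mul_apply, Fin.sum_univ_three, Matrix.one_apply,
            Matrix.vecHead, Matrix.vecTail]
      · rw [Matrix.det_fin_three]; norm_num; simp
      · ext i j
        fin_cases i <;> fin_cases j <;>
          simp [skew, Matrix.mul_apply, Fin.sum_univ_three, Matrix.sub_apply,
            Matrix.smul_apply, Matrix.transpose_apply, Matrix.diagonal,
            Matrix.vecHead, Matrix.vecTail]
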